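/- arXiv:1712.00487 — 3 statements merged into one kernel-verified Lean document; each statement's English description precedes it below -/
import Mathlib

section
/- Let X be a real Hilbert space, let m ≥ 2, and for each i ∈ {1,…,m} let T_i : X → X be firmly nonexpansive, and let v_i denote the minimal displacement vector of T_i (the minimal-norm element of the closure of the range of Id − T_i). Then for every ε > 0 there exists x ∈ X such that ‖x − T_m T_{m−1} ⋯ T_1 x‖ ≤ ε + ∑_{k=1}^{m} ‖v_k‖. -/
/-- Composition `T (m-1) ∘ ⋯ ∘ T 1 ∘ T 0` applied to `x` (apply `T 0` first),
so that with `T i` playing the role of `T_{i+1}` this is `T_m T_{m-1} ⋯ T_1 x`. -/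
def compSeq {X : Type*} (m : ℕ) (T : Fin m → X → X) : X → X :=
  fun x => (List.ofFn T).foldl (fun y f => f y) x

/-!
Translate each `T i` by its displacement `p i - T i p i` at a point `p i`: the translate is still
firmly nonexpansive, has `p i` as a fixed point, and differs from `T i` by a vector of norm
`‖p i - T i p i‖`, so the composition moves by at most the sum of these norms.

A firmly nonexpansive `f` with a fixed point `p` satisfies `‖f y‖² ≤ ‖y‖² + ‖p‖²`, so a composition
`G` of such maps satisfies `‖G y‖² ≤ ‖y‖² + K`. The fixed point `x` of the contraction
`(1 - μ) • G` then has `‖x - G x‖² = μ² ‖G x‖² ≤ μ K`, which is small for small `μ`. Letting the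
`p i - T i p i` approach `v i` gives the bound.
-/

open Function

section Composition

variable {α : Type*}

theorem compSeq_zero (T : Fin 0 → α → α) (x : α) : compSeq 0 T x = x := rfl

theorem compSeq_succ {m : ℕ} (T : Fin (m + 1) → α → α) (x : α) :
    compSeq (m + 1) T x = compSeq m (fun i => T i.succ) (T 0 x) := by
  simp [compSeq, List.ofFn_succ]

theorem compSeq_prodMap {β : Type*} {m : ℕ} (S : Fin m → α → α) (T : Fin m → β → β) (p : α × β) :
    compSeq m (fun i => Prod.map (S i) (T i)) p = (compSeq m S p.1, compSeq m T p.2) := by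
  induction m generalizing p with
  | zero => rfl
  | succ m ih => simp only [compSeq_succ, ih]; rfl

theorem apply_compSeq_le_add_sum {m : ℕ} (φ : α → ℝ) (T : Fin m → α → α) (K : Fin m → ℝ)
    (hT : ∀ i x, φ (T i x) ≤ φ x + K i) (x : α) :
    φ (compSeq m T x) ≤ φ x + ∑ i, K i := by
  induction m generalizing x with
  | zero => simp [compSeq_zero]
  | succ m ih =>
    rw [compSeq_succ, Fin.sum_univ_succ]
    linarith [ih (fun i => T i.succ) (fun i => K i.succ) (fun i => hT i.succ) (T 0 x), hT 0 x]

theorem dist_compSeq_le_add_sum [PseudoMetricSpace α] {m : ℕ} (S T : Fin m → α → α)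
    (c : Fin m → ℝ) (hST : ∀ i x y, dist (S i x) (T i y) ≤ dist x y + c i) (x y : α) :
    dist (compSeq m S x) (compSeq m T y) ≤ dist x y + ∑ i, c i := by
  simpa only [compSeq_prodMap] using
    apply_compSeq_le_add_sum (fun p : α × α => dist p.1 p.2) (fun i => Prod.map (S i) (T i)) c
      (fun i p => hST i p.1 p.2) (x, y)

theorem lipschitzWith_one_compSeq [PseudoMetricSpace α] {m : ℕ} {T : Fin m → α → α}
    (hT : ∀ i, LipschitzWith 1 (T i)) : LipschitzWith 1 (compSeq m T) :=
  LipschitzWith.of_dist_le_mul fun x y => by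
    simpa using
      dist_compSeq_le_add_sum T T 0 (fun i x y => by simpa using (hT i).dist_le_mul x y) x y

end Composition

section FirmlyNonexpansive

variable {X : Type*} [NormedAddCommGroup X] [InnerProductSpace ℝ X]

def FirmlyNonexpansive (f : X → X) : Prop :=
  ∀ x y : X, ‖f x - f y‖ ^ 2 ≤ (inner ℝ (x - y) (f x - f y) : ℝ)

namespace FirmlyNonexpansive

variable {f : X → X}

theorem norm_sub_le (hf : FirmlyNonexpansive f) (x y : X) : ‖f x - f y‖ ≤ ‖x - y‖ := by
  have h := (hf x y).trans (real_inner_le_norm _ _)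
  nlinarith [norm_nonneg (f x - f y), norm_nonneg (x - y)]

theorem lipschitzWith_one (hf : FirmlyNonexpansive f) : LipschitzWith 1 f :=
  LipschitzWith.of_dist_le_mul fun x y => by
    simpa only [NNReal.coe_one, one_mul, dist_eq_norm] using hf.norm_sub_le x y

theorem add_const (hf : FirmlyNonexpansive f) (c : X) : FirmlyNonexpansive (fun x => f x + c) := by
  intro x y
  simpa only [add_sub_add_right_eq_sub] using hf x y

theorem norm_sq_apply_le_of_isFixedPt (hf : FirmlyNonexpansive f) {p : X} (hp : IsFixedPt f p)
    (y : X) : ‖f y‖ ^ 2 ≤ ‖y‖ ^ 2 + ‖p‖ ^ 2 := by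
  have hfirm := hf y p
  rw [hp.eq] at hfirm
  -- `‖y‖² + ‖p‖² - ‖f y‖²` exceeds `‖y - f y + p‖²` by twice the slack in `hfirm`
  have hsq := real_inner_self_nonneg (x := y - f y + p)
  simp only [← real_inner_self_eq_norm_sq, inner_sub_left, inner_sub_right, inner_add_left,
    inner_add_right, real_inner_comm] at hfirm hsq ⊢
  linarith

end FirmlyNonexpansive

theorem exists_norm_sub_apply_le_of_norm_sq_apply_le [CompleteSpace X] {G : X → X}
    (hG : LipschitzWith 1 G) {K : ℝ} (hK : ∀ y, ‖G y‖ ^ 2 ≤ ‖y‖ ^ 2 + K) {η : ℝ} (hη : 0 < η) :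
    ∃ x, ‖x - G x‖ ≤ η := by
  have hK0 : 0 ≤ K := by simpa using (sq_nonneg ‖G 0‖).trans (hK 0)
  set μ := min (1 / 2) (η ^ 2 / (K + 1))
  have hμ0 : 0 < μ := lt_min (by norm_num) (by positivity)
  have hμ1 : μ ≤ 1 / 2 := min_le_left _ _
  have hμK : μ * (K + 1) ≤ η ^ 2 := (le_div_iff₀ (by positivity)).1 (min_le_right _ _)
  have hcontr : ContractingWith (‖1 - μ‖₊ * 1) (fun x => (1 - μ) • G x) := by
    refine ⟨?_, (lipschitzWith_smul (1 - μ)).comp hG⟩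
    rw [mul_one, ← NNReal.coe_lt_coe, coe_nnnorm, Real.norm_of_nonneg (by linarith)]
    simpa using hμ0
  obtain ⟨x, hx⟩ : ∃ x, (1 - μ) • G x = x := ⟨_, hcontr.fixedPoint_isFixedPt⟩
  have hdisp : ‖x - G x‖ = μ * ‖G x‖ := calc
    _ = ‖(1 - μ) • G x - G x‖ := by rw [hx]
    _ = ‖(-μ) • G x‖ := by congr 1; module
    _ = μ * ‖G x‖ := by rw [norm_smul, norm_neg, Real.norm_of_nonneg hμ0.le]
  have hnorm : ‖x‖ = (1 - μ) * ‖G x‖ := calc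
    _ = ‖(1 - μ) • G x‖ := by rw [hx]
    _ = (1 - μ) * ‖G x‖ := by rw [norm_smul, Real.norm_of_nonneg (by linarith)]
  have hGx := hK x
  rw [hnorm] at hGx
  have hsq : ‖x - G x‖ ^ 2 ≤ η ^ 2 := by
    rw [hdisp]
    nlinarith [sq_nonneg ‖G x‖]
  exact ⟨x, (pow_le_pow_iff_left₀ (norm_nonneg _) hη.le two_ne_zero).1 hsq⟩

theorem exists_norm_sub_compSeq_le_of_isFixedPt [CompleteSpace X] {m : ℕ} {T : Fin m → X → X}
    (hT : ∀ i, FirmlyNonexpansive (T i)) {p : Fin m → X} (hp : ∀ i, IsFixedPt (T i) (p i))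
    {η : ℝ} (hη : 0 < η) : ∃ x, ‖x - compSeq m T x‖ ≤ η :=
  exists_norm_sub_apply_le_of_norm_sq_apply_le
    (lipschitzWith_one_compSeq fun i => (hT i).lipschitzWith_one)
    (apply_compSeq_le_add_sum (‖·‖ ^ 2) T (fun i => ‖p i‖ ^ 2)
      fun i => (hT i).norm_sq_apply_le_of_isFixedPt (hp i)) hη

theorem exists_norm_sub_compSeq_le_add_sum [CompleteSpace X] {m : ℕ} {T : Fin m → X → X}
    (hT : ∀ i, FirmlyNonexpansive (T i)) (p : Fin m → X) {η : ℝ} (hη : 0 < η) :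
    ∃ x, ‖x - compSeq m T x‖ ≤ η + ∑ i, ‖p i - T i (p i)‖ := by
  set S : Fin m → X → X := fun i x => T i x + (p i - T i (p i))
  obtain ⟨x, hx⟩ := exists_norm_sub_compSeq_le_of_isFixedPt (T := S)
    (fun i => (hT i).add_const _) (p := p) (fun i => add_sub_cancel _ _) hη
  have hST : dist (compSeq m S x) (compSeq m T x) ≤ ∑ i, ‖p i - T i (p i)‖ := by
    simpa using dist_compSeq_le_add_sum S T _ (fun i y z => by
      rw [dist_eq_norm, dist_eq_norm, add_sub_right_comm]
      exact (norm_add_le _ _).trans (by gcongr; exact (hT i).norm_sub_le y z)) x x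
  rw [dist_eq_norm] at hST
  exact ⟨x, (norm_sub_le_norm_sub_add_norm_sub x (compSeq m S x) _).trans (add_le_add hx hST)⟩

end FirmlyNonexpansive

theorem stmt_0_general {X : Type*} [NormedAddCommGroup X] [InnerProductSpace ℝ X] [CompleteSpace X]
    (m : ℕ) (T : Fin m → X → X)
    (hT : ∀ i, ∀ x y : X, ‖T i x - T i y‖ ^ 2 ≤ (inner ℝ (x - y) (T i x - T i y) : ℝ))
    (v : Fin m → X)
    (hv : ∀ i, v i ∈ closure (Set.range (fun x => x - T i x)))
    (ε : ℝ) (hε : 0 < ε) :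
    ∃ x : X, ‖x - compSeq m T x‖ ≤ ε + ∑ i, ‖v i‖ := by
  set δ := ε / 2 / (m + 1)
  have hδ : 0 < δ := by positivity
  have hnear : ∀ i, ∃ p, ‖p - T i p‖ < ‖v i‖ + δ := fun i => by
    obtain ⟨_, ⟨p, rfl⟩, hp⟩ := Metric.mem_closure_iff.1 (hv i) δ hδ
    refine ⟨p, (norm_le_norm_add_norm_sub (v i) _).trans_lt ?_⟩
    rwa [← dist_eq_norm, add_lt_add_iff_left]
  choose p hp using hnear
  obtain ⟨x, hx⟩ := exists_norm_sub_compSeq_le_add_sum hT p (half_pos hε)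
  have hsum : ∑ i, ‖p i - T i (p i)‖ ≤ ∑ i, ‖v i‖ + ε / 2 := calc
    _ ≤ ∑ i, (‖v i‖ + δ) := Finset.sum_le_sum fun i _ => (hp i).le
    _ = ∑ i, ‖v i‖ + m * δ := by simp [Finset.sum_add_distrib]
    _ ≤ ∑ i, ‖v i‖ + ε / 2 := by
      gcongr
      rw [mul_div_left_comm]
      exact mul_le_of_le_one_right (by positivity) ((div_le_one (by positivity)).2 (by linarith))
  exact ⟨x, by linarith⟩

theorem stmt_0 {X : Type*} [NormedAddCommGroup X] [InnerProductSpace ℝ X] [CompleteSpace X]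
    (m : ℕ) (hm : 2 ≤ m) (T : Fin m → X → X)
    (hT : ∀ i, ∀ x y : X, ‖T i x - T i y‖ ^ 2 ≤ (inner ℝ (x - y) (T i x - T i y) : ℝ))
    (v : Fin m → X)
    (hv : ∀ i, v i ∈ closure (Set.range (fun x => x - T i x)))
    (hvmin : ∀ i, ∀ w ∈ closure (Set.range (fun x => x - T i x)), ‖v i‖ ≤ ‖w‖)
    (ε : ℝ) (hε : 0 < ε) :
    ∃ x : X, ‖x - compSeq m T x‖ ≤ ε + ∑ i, ‖v i‖ :=
  stmt_0_general m T hT v hv ε hε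
end

section
/- Let X be a real Hilbert space, let m ≥ 2, for each i ∈ {1,…,m} let T_i : X → X be firmly nonexpansive with minimal displacement vector v_i, and let λ_1,…,λ_m ∈ (0,1] with ∑_{i=1}^m λ_i = 1. Let v̄ be the minimal displacement vector of the convex combination T̄ = ∑_{i=1}^m λ_i T_i. Then ‖v̄‖ ≤ ‖∑_{i=1}^m λ_i v_i‖. -/
/-!
For a firmly nonexpansive map `D` one has `⟪x, D x⟫ ≥ ⟪x, D y⟫ - ‖y‖² / 4` for all `x, y`, so every
`u ∈ closure (range D)` satisfies `⟪x, D x⟫ ≥ ⟪x, u⟫ - ε ‖x‖ - K_ε` for each `ε > 0`. This applies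
to the displacement maps `Id - Tᵢ` (again firmly nonexpansive) with `u = vᵢ`, and such bounds
survive convex combinations, giving one for `Id - T̄` with `u = ∑ λᵢ vᵢ`. The fixed point `x_c` of
the contraction `(1 + c)⁻¹ T̄` has displacement `-c x_c`, so `‖v̄‖ ≤ c ‖x_c‖`, while the lower bound
at `x_c` forces `c ‖x_c‖ ≤ ‖u‖ + ε + o(1)` as `c → 0`.
-/

open Set
open scoped InnerProductSpace

theorem sq_le_mul_add_of_le {a s B C : ℝ} (ha : 0 ≤ a) (has : a ≤ s) (hC : 0 ≤ C)
    (hs : s ^ 2 ≤ B * s + C) : a ^ 2 ≤ B * a + C := by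
  rcases le_total a B with haB | hBa
  · nlinarith
  · nlinarith [mul_nonneg (sub_nonneg.mpr has) (by linarith : 0 ≤ s + a - B)]

section Nonexpansive

variable {E : Type*} [NormedAddCommGroup E] [NormedSpace ℝ E]

theorem LipschitzWith.sum_smul_of_sum_eq_one {ι : Type*} [Fintype ι] {T : ι → E → E} {w : ι → ℝ}
    (hT : ∀ i, LipschitzWith 1 (T i)) (hw : ∀ i, 0 ≤ w i) (hw1 : ∑ i, w i = 1) :
    LipschitzWith 1 fun x => ∑ i, w i • T i x := by
  refine LipschitzWith.mk_one fun x y => ?_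
  rw [dist_eq_norm, dist_eq_norm, ← Finset.sum_sub_distrib]
  calc ‖∑ i, (w i • T i x - w i • T i y)‖ ≤ ∑ i, w i * ‖T i x - T i y‖ := by
        refine (norm_sum_le _ _).trans (le_of_eq ?_)
        simp only [← smul_sub, norm_smul, Real.norm_of_nonneg (hw _)]
    _ ≤ ∑ i, w i * ‖x - y‖ := by
        gcongr with i
        exacts [hw i, by simpa using (hT i).norm_sub_le x y]
    _ = ‖x - y‖ := by rw [← Finset.sum_mul, hw1, one_mul]

theorem LipschitzWith.exists_sub_eq_neg_smul_self [CompleteSpace E] {S : E → E}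
    (hS : LipschitzWith 1 S) {c : ℝ} (hc : 0 < c) : ∃ x, x - S x = -(c • x) := by
  have hc1 : (0 : ℝ) < 1 + c := by linarith
  have hcon : ContractingWith ‖(1 + c)⁻¹‖₊ fun x => (1 + c)⁻¹ • S x := by
    refine ⟨?_, ?_⟩
    · rw [← NNReal.coe_lt_coe, coe_nnnorm, Real.norm_of_nonneg (by positivity)]
      exact inv_lt_one_of_one_lt₀ (by linarith)
    · simpa only [mul_one, Function.comp_def] using
        (lipschitzWith_smul (β := E) (1 + c)⁻¹).comp hS
  refine ⟨ContractingWith.fixedPoint _ hcon, ?_⟩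
  have hx : (1 + c)⁻¹ • S _ = _ := hcon.fixedPoint_isFixedPt
  rw [inv_smul_eq_iff₀ hc1.ne'] at hx
  rw [hx]
  module

end Nonexpansive

section FirmlyNonexpansive

variable {X : Type*} [NormedAddCommGroup X] [InnerProductSpace ℝ X]

def IsFirmlyNonexpansive (T : X → X) : Prop :=
  ∀ x y, ‖T x - T y‖ ^ 2 ≤ ⟪x - y, T x - T y⟫_ℝ

def IsInnerLowerBound (D : X → X) (u : X) : Prop :=
  ∀ ε > 0, ∃ K, ∀ x, ⟪x, u - D x⟫_ℝ ≤ ε * ‖x‖ + K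

namespace IsFirmlyNonexpansive

variable {T : X → X}

theorem lipschitzWith_one (hT : IsFirmlyNonexpansive T) : LipschitzWith 1 T := by
  refine LipschitzWith.mk_one fun x y => ?_
  rw [dist_eq_norm, dist_eq_norm]
  have h := (hT x y).trans (real_inner_le_norm _ _)
  nlinarith [norm_nonneg (T x - T y), norm_nonneg (x - y)]

theorem id_sub (hT : IsFirmlyNonexpansive T) : IsFirmlyNonexpansive fun x => x - T x := by
  intro x y
  have hexp : ⟪x - y, (x - y) - (T x - T y)⟫_ℝ = ‖x - y‖ ^ 2 - ⟪x - y, T x - T y⟫_ℝ := by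
    rw [inner_sub_right, real_inner_self_eq_norm_sq]
  rw [show x - T x - (y - T y) = (x - y) - (T x - T y) by abel, norm_sub_sq_real, hexp]
  linarith [hT x y]

theorem inner_apply_sub_le (hT : IsFirmlyNonexpansive T) (x y : X) :
    ⟪x, T y⟫_ℝ - ‖y‖ ^ 2 / 4 ≤ ⟪x, T x⟫_ℝ := by
  have hfirm := hT x y
  have hy : -(‖y‖ * ‖T x - T y‖) ≤ ⟪y, T x - T y⟫_ℝ :=
    neg_le_of_abs_le (abs_real_inner_le_norm _ _)
  rw [inner_sub_left, inner_sub_right, inner_sub_right] at hfirm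
  rw [inner_sub_right] at hy
  nlinarith [sq_nonneg (‖T x - T y‖ - ‖y‖ / 2)]

theorem isInnerLowerBound (hT : IsFirmlyNonexpansive T) {u : X} (hu : u ∈ closure (range T)) :
    IsInnerLowerBound T u := by
  intro ε hε
  obtain ⟨_, ⟨y, rfl⟩, hy⟩ := Metric.mem_closure_iff.mp hu ε hε
  refine ⟨‖y‖ ^ 2 / 4, fun x => ?_⟩
  have hclose : ⟪x, u - T y⟫_ℝ ≤ ε * ‖x‖ := by
    calc ⟪x, u - T y⟫_ℝ ≤ ‖x‖ * ‖u - T y‖ := real_inner_le_norm _ _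
      _ ≤ ε * ‖x‖ := by rw [mul_comm, ← dist_eq_norm]; gcongr
  have := hT.inner_apply_sub_le x y
  rw [inner_sub_right] at hclose ⊢
  linarith

end IsFirmlyNonexpansive

theorem IsInnerLowerBound.sum_smul {ι : Type*} [Fintype ι] {D : ι → X → X} {u : ι → X}
    {w : ι → ℝ} (hD : ∀ i, IsInnerLowerBound (D i) (u i)) (hw : ∀ i, 0 ≤ w i)
    (hw1 : ∑ i, w i = 1) :
    IsInnerLowerBound (fun x => ∑ i, w i • D i x) (∑ i, w i • u i) := by
  intro ε hε
  choose K hK using fun i => hD i ε hε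
  refine ⟨∑ i, w i * K i, fun x => ?_⟩
  calc ⟪x, ∑ i, w i • u i - ∑ i, w i • D i x⟫_ℝ = ∑ i, w i * ⟪x, u i - D i x⟫_ℝ := by
        simp only [← Finset.sum_sub_distrib, ← smul_sub, inner_sum, real_inner_smul_right]
    _ ≤ ∑ i, w i * (ε * ‖x‖ + K i) := by gcongr with i; exacts [hw i, hK i x]
    _ = ε * ‖x‖ + ∑ i, w i * K i := by
        simp only [mul_add, Finset.sum_add_distrib, ← Finset.sum_mul, hw1, one_mul]

theorem LipschitzWith.norm_le_of_isInnerLowerBound [CompleteSpace X] {S : X → X}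
    (hS : LipschitzWith 1 S) {u w : X}
    (hu : IsInnerLowerBound (fun x => x - S x) u) (hw : ∀ x, ‖w‖ ≤ ‖x - S x‖) : ‖w‖ ≤ ‖u‖ := by
  refine le_of_forall_pos_le_add fun ε hε => ?_
  obtain ⟨K, hK⟩ := hu ε hε
  have hK0 : 0 ≤ K := by simpa using hK 0
  have hsmall : ∀ c > 0, ‖w‖ ^ 2 ≤ (‖u‖ + ε) * ‖w‖ + c * K := by
    intro c hc
    obtain ⟨x, hx⟩ := hS.exists_sub_eq_neg_smul_self hc
    have hwx : ‖w‖ ≤ c * ‖x‖ := by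
      simpa only [hx, norm_neg, norm_smul, Real.norm_of_nonneg hc.le] using hw x
    have hx_bound : c * ‖x‖ ^ 2 ≤ (‖u‖ + ε) * ‖x‖ + K := by
      have h : ⟪x, u - (x - S x)⟫_ℝ ≤ ε * ‖x‖ + K := hK x
      rw [hx, sub_neg_eq_add, inner_add_right, real_inner_smul_right,
        real_inner_self_eq_norm_sq] at h
      nlinarith [neg_le_of_abs_le (abs_real_inner_le_norm x u)]
    refine sq_le_mul_add_of_le (norm_nonneg w) hwx (mul_nonneg hc.le hK0) ?_
    nlinarith [mul_le_mul_of_nonneg_left hx_bound hc.le]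
  have hsq : ‖w‖ ^ 2 ≤ (‖u‖ + ε) * ‖w‖ := by
    refine le_of_forall_pos_le_add fun δ hδ => ?_
    have hcK : δ / (K + 1) * K ≤ δ := by
      rw [div_mul_eq_mul_div, div_le_iff₀ (by linarith)]
      nlinarith
    linarith [hsmall (δ / (K + 1)) (by positivity)]
  nlinarith [norm_nonneg w, norm_nonneg u]

end FirmlyNonexpansive

theorem stmt_11_general {X : Type*} [NormedAddCommGroup X] [InnerProductSpace ℝ X] [CompleteSpace X]
    (m : ℕ) (T : Fin m → X → X)
    (hT : ∀ i, ∀ x y : X, ‖T i x - T i y‖ ^ 2 ≤ (inner ℝ (x - y) (T i x - T i y) : ℝ))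
    (v : Fin m → X)
    (hv : ∀ i, v i ∈ closure (Set.range (fun x => x - T i x)))
    (lam : Fin m → ℝ) (hlam : ∀ i, lam i ∈ Set.Ioc (0 : ℝ) 1) (hsum : ∑ i, lam i = 1)
    (vbar : X)
    (hvbarmin : ∀ w ∈ closure (Set.range (fun x => x - ∑ i, lam i • T i x)), ‖vbar‖ ≤ ‖w‖) :
    ‖vbar‖ ≤ ‖∑ i, lam i • v i‖ := by
  have hfirm : ∀ i, IsFirmlyNonexpansive (T i) := hT
  have hlam_nonneg : ∀ i, 0 ≤ lam i := fun i => (hlam i).1.le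
  have hdisp : (fun x => x - ∑ i, lam i • T i x) = fun x => ∑ i, lam i • (x - T i x) := by
    funext x
    simp only [smul_sub, Finset.sum_sub_distrib, ← Finset.sum_smul, hsum, one_smul]
  have hbound : IsInnerLowerBound (fun x => x - ∑ i, lam i • T i x) (∑ i, lam i • v i) := by
    rw [hdisp]
    exact .sum_smul (fun i => (hfirm i).id_sub.isInnerLowerBound (hv i)) hlam_nonneg hsum
  have hnonexp : LipschitzWith 1 fun x => ∑ i, lam i • T i x :=
    .sum_smul_of_sum_eq_one (fun i => (hfirm i).lipschitzWith_one) hlam_nonneg hsum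
  exact hnonexp.norm_le_of_isInnerLowerBound hbound fun x =>
    hvbarmin _ (subset_closure (mem_range_self x))

theorem stmt_11 {X : Type*} [NormedAddCommGroup X] [InnerProductSpace ℝ X] [CompleteSpace X]
    (m : ℕ) (hm : 2 ≤ m) (T : Fin m → X → X)
    (hT : ∀ i, ∀ x y : X, ‖T i x - T i y‖ ^ 2 ≤ (inner ℝ (x - y) (T i x - T i y) : ℝ))
    (v : Fin m → X)
    (hv : ∀ i, v i ∈ closure (Set.range (fun x => x - T i x)))
    (hvmin : ∀ i, ∀ w ∈ closure (Set.range (fun x => x - T i x)), ‖v i‖ ≤ ‖w‖)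
    (lam : Fin m → ℝ) (hlam : ∀ i, lam i ∈ Set.Ioc (0 : ℝ) 1) (hsum : ∑ i, lam i = 1)
    (vbar : X)
    (hvbar : vbar ∈ closure (Set.range (fun x => x - ∑ i, lam i • T i x)))
    (hvbarmin : ∀ w ∈ closure (Set.range (fun x => x - ∑ i, lam i • T i x)), ‖vbar‖ ≤ ‖w‖) :
    ‖vbar‖ ≤ ‖∑ i, lam i • v i‖ :=
  stmt_11_general m T hT v hv lam hlam hsum vbar hvbarmin
end

section
/- Let X be a real Hilbert space, let a_1 ∈ X with a_1 ≠ 0 and a_2 ∈ X, and define T_1 : X → X by x ↦ x − a_1 and T_2 : X → X by x ↦ (1/2) x − a_2. Let λ_1, λ_2 ∈ (0,1] with λ_1 + λ_2 = 1 and set T̄ = λ_1 T_1 + λ_2 T_2. Then ran(Id − T_1) = {a_1}, ran(Id − T_2) = X, ran(Id − T̄) = X, the minimal displacement vectors satisfy v_{T_1} = a_1, v_{T_2} = 0 and v_{T̄} = 0, and hence v_{T̄} = 0 ≠ λ_1 a_1 = λ_1 v_{T_1} + λ_2 v_{T_2}. -/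
theorem stmt_14 {X : Type*} [NormedAddCommGroup X] [InnerProductSpace ℝ X] [CompleteSpace X]
    (a1 a2 : X) (ha1 : a1 ≠ 0)
    (T1 T2 : X → X)
    (hT1def : ∀ x, T1 x = x - a1)
    (hT2def : ∀ x, T2 x = (1 / 2 : ℝ) • x - a2)
    (lam1 lam2 : ℝ) (hlam1 : lam1 ∈ Set.Ioc (0 : ℝ) 1) (hlam2 : lam2 ∈ Set.Ioc (0 : ℝ) 1)
    (hsum : lam1 + lam2 = 1)
    (Tbar : X → X) (hTbardef : ∀ x, Tbar x = lam1 • T1 x + lam2 • T2 x)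
    (v1 v2 vbar : X)
    (hv1 : v1 ∈ closure (Set.range (fun x => x - T1 x)))
    (hv1min : ∀ w ∈ closure (Set.range (fun x => x - T1 x)), ‖v1‖ ≤ ‖w‖)
    (hv2 : v2 ∈ closure (Set.range (fun x => x - T2 x)))
    (hv2min : ∀ w ∈ closure (Set.range (fun x => x - T2 x)), ‖v2‖ ≤ ‖w‖)
    (hvbar : vbar ∈ closure (Set.range (fun x => x - Tbar x)))
    (hvbarmin : ∀ w ∈ closure (Set.range (fun x => x - Tbar x)), ‖vbar‖ ≤ ‖w‖) :
    Set.range (fun x => x - T1 x) = {a1} ∧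
      Set.range (fun x => x - T2 x) = Set.univ ∧
      Set.range (fun x => x - Tbar x) = Set.univ ∧
      v1 = a1 ∧ v2 = 0 ∧ vbar = 0 ∧
      lam1 • v1 + lam2 • v2 = lam1 • a1 ∧
      vbar ≠ lam1 • v1 + lam2 • v2 := by
  obtain ⟨hl1, _⟩ := hlam1
  obtain ⟨hl2, _⟩ := hlam2
  have hl2ne : lam2 ≠ 0 := ne_of_gt hl2
  have hlam1eq : lam1 = 1 - lam2 := by linarith
  have hr1 : Set.range (fun x => x - T1 x) = {a1} := by
    ext y
    constructor
    · rintro ⟨x, rfl⟩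
      simp [hT1def]
    · rintro rfl
      exact ⟨0, by simp [hT1def]⟩
  have key2 : ∀ x : X, x - T2 x = (1 / 2 : ℝ) • x + a2 := by
    intro x
    rw [hT2def]
    module
  have hr2 : Set.range (fun x => x - T2 x) = Set.univ := by
    rw [Set.eq_univ_iff_forall]
    intro y
    refine ⟨(2 : ℝ) • (y - a2), ?_⟩
    simp only [key2, smul_smul]
    norm_num
  have keyb : ∀ x : X, x - Tbar x = (lam2 / 2) • x + (lam1 • a1 + lam2 • a2) := by
    intro x
    rw [hTbardef, hT1def, hT2def, hlam1eq]
    module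
  have hrb : Set.range (fun x => x - Tbar x) = Set.univ := by
    rw [Set.eq_univ_iff_forall]
    intro y
    refine ⟨(2 / lam2 : ℝ) • (y - (lam1 • a1 + lam2 • a2)), ?_⟩
    simp only [keyb, smul_smul]
    rw [show lam2 / 2 * (2 / lam2) = 1 by field_simp]
    simp
  have hv1' : v1 = a1 := by
    rw [hr1, closure_singleton, Set.mem_singleton_iff] at hv1
    exact hv1
  have hv2' : v2 = 0 := by
    have := hv2min 0 (by rw [hr2, closure_univ]; trivial)
    simpa using this
  have hvb' : vbar = 0 := by
    have := hvbarmin 0 (by rw [hrb, closure_univ]; trivial)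
    simpa using this
  refine ⟨hr1, hr2, hrb, hv1', hv2', hvb', ?_, ?_⟩
  · rw [hv1', hv2', smul_zero, add_zero]
  · rw [hvb', hv1', hv2', smul_zero, add_zero]
    exact (smul_ne_zero hl1.ne' ha1).symm
end
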